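/- arXiv:2111.13368 — 4 statements merged into one kernel-verified Lean document; each statement's English description precedes it below -/
import Mathlib

section
/- Let a > 0, let k ≥ 1, let σ_1, …, σ_k be positive real numbers, and let w_1, …, w_k be nonnegative real numbers with w_1 + ⋯ + w_k = 1. If a·σ_j < π/2 for every j = 1, …, k, then every complex number λ satisfying the characteristic equation λ + a·∑_{j=1}^k w_j·exp(−σ_j·λ) = 0 has strictly negative real part. -/
open Real Complex

/-! If `Re λ ≥ 0`, every term `w_j e^{-σ_j λ}` has modulus at most `w_j`, so the characteristic
equation forces `|λ| ≤ a`, hence `|σ_j Im λ| ≤ a σ_j < π/2`. Then every term has positive real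
part, and the real part of the equation, `Re λ + a · (positive) = 0`, contradicts `Re λ ≥ 0`. -/

section WeightedExpSum

variable {ι : Type*} [Fintype ι] {σ w : ι → ℝ} {z : ℂ}

lemma re_ofReal_mul_exp_neg_mul (w σ : ℝ) (z : ℂ) :
    ((w : ℂ) * exp (-(σ : ℂ) * z)).re = w * (Real.exp (-σ * z.re) * Real.cos (σ * z.im)) := by
  rw [re_ofReal_mul, exp_re]
  simp [mul_re, mul_im]

lemma norm_ofReal_mul_exp_neg_mul_le {w σ : ℝ} (hw : 0 ≤ w) (hσ : 0 ≤ σ) (hz : 0 ≤ z.re) :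
    ‖(w : ℂ) * exp (-(σ : ℂ) * z)‖ ≤ w := by
  have hexp : Real.exp (-σ * z.re) ≤ 1 :=
    Real.exp_le_one_iff.mpr (by nlinarith)
  rw [norm_mul, norm_exp, norm_real, Real.norm_of_nonneg hw]
  simpa [mul_re] using mul_le_of_le_one_right hw hexp

lemma norm_sum_ofReal_mul_exp_neg_mul_le_one (hσ : ∀ j, 0 ≤ σ j) (hw : ∀ j, 0 ≤ w j)
    (hwsum : ∑ j, w j = 1) (hz : 0 ≤ z.re) :
    ‖∑ j, (w j : ℂ) * exp (-(σ j : ℂ) * z)‖ ≤ 1 :=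
  calc ‖∑ j, (w j : ℂ) * exp (-(σ j : ℂ) * z)‖
      ≤ ∑ j, ‖(w j : ℂ) * exp (-(σ j : ℂ) * z)‖ := norm_sum_le _ _
    _ ≤ ∑ j, w j :=
        Finset.sum_le_sum fun j _ => norm_ofReal_mul_exp_neg_mul_le (hw j) (hσ j) hz
    _ = 1 := hwsum

lemma re_sum_ofReal_mul_exp_neg_mul_pos (hw : ∀ j, 0 ≤ w j) (hwsum : ∑ j, w j = 1)
    (hangle : ∀ j, |σ j * z.im| < π / 2) :
    0 < (∑ j, (w j : ℂ) * exp (-(σ j : ℂ) * z)).re := by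
  have hcos : ∀ j, 0 < Real.cos (σ j * z.im) := fun j =>
    cos_pos_of_mem_Ioo ⟨by linarith [neg_abs_le (σ j * z.im), hangle j],
      by linarith [le_abs_self (σ j * z.im), hangle j]⟩
  obtain ⟨j₀, hj₀⟩ : ∃ j, 0 < w j := by
    by_contra! hnonpos
    linarith [Finset.sum_nonpos fun j (_ : j ∈ Finset.univ) => hnonpos j]
  simp only [re_sum, re_ofReal_mul_exp_neg_mul]
  exact Finset.sum_pos' (fun j _ => mul_nonneg (hw j) (mul_pos (Real.exp_pos _) (hcos j)).le)
    ⟨j₀, Finset.mem_univ _, mul_pos hj₀ (mul_pos (Real.exp_pos _) (hcos j₀))⟩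

end WeightedExpSum

theorem stmt_0_general (a : ℝ) (ha : 0 < a) (k : ℕ)
    (σ w : Fin k → ℝ) (hσ : ∀ j, 0 < σ j) (hw : ∀ j, 0 ≤ w j)
    (hwsum : ∑ j, w j = 1) (hstab : ∀ j, a * σ j < Real.pi / 2)
    (lam : ℂ)
    (hroot : lam + (a : ℂ) * ∑ j, (w j : ℂ) * Complex.exp (-(σ j : ℂ) * lam) = 0) :
    lam.re < 0 := by
  by_contra! hre
  set S := ∑ j, (w j : ℂ) * Complex.exp (-(σ j : ℂ) * lam)
  have hS : ‖S‖ ≤ 1 :=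
    norm_sum_ofReal_mul_exp_neg_mul_le_one (fun j => (hσ j).le) hw hwsum hre
  have hlam : ‖lam‖ ≤ a := by
    rw [eq_neg_of_add_eq_zero_left hroot, norm_neg, norm_mul, norm_real, Real.norm_of_nonneg ha.le]
    exact mul_le_of_le_one_right ha.le hS
  have hangle : ∀ j, |σ j * lam.im| < π / 2 := fun j =>
    calc |σ j * lam.im| = σ j * |lam.im| := by rw [abs_mul, abs_of_pos (hσ j)]
      _ ≤ σ j * a := mul_le_mul_of_nonneg_left ((abs_im_le_norm lam).trans hlam) (hσ j).le
      _ < π / 2 := by linarith [hstab j]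
  have hSre : 0 < S.re := re_sum_ofReal_mul_exp_neg_mul_pos hw hwsum hangle
  have hroot_re : lam.re + a * S.re = 0 := by
    simpa [re_ofReal_mul] using congrArg re hroot
  linarith [mul_pos ha hSre]

theorem stmt_0 (a : ℝ) (ha : 0 < a) (k : ℕ) (hk : 1 ≤ k)
    (σ w : Fin k → ℝ) (hσ : ∀ j, 0 < σ j) (hw : ∀ j, 0 ≤ w j)
    (hwsum : ∑ j, w j = 1) (hstab : ∀ j, a * σ j < Real.pi / 2)
    (lam : ℂ)
    (hroot : lam + (a : ℂ) * ∑ j, (w j : ℂ) * Complex.exp (-(σ j : ℂ) * lam) = 0) :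
    lam.re < 0 :=
  stmt_0_general a ha k σ w hσ hw hwsum hstab lam hroot
end

section
/- Let a > 0 and σ > 0 with a·σ < π/2. Then every complex number λ satisfying λ + a·exp(−σ·λ) = 0 has strictly negative real part. -/
/-!
Suppose `λ = -a e^{-σλ}` had `Re λ ≥ 0`. Then `|e^{-σλ}| ≤ 1`, so `|Im λ| ≤ |λ| ≤ a` and
`|σ Im λ| ≤ aσ < π/2`. Hence `cos (σ Im λ) > 0`, and taking real parts,
`Re λ = -a e^{-σ Re λ} cos (σ Im λ) < 0`, a contradiction.
-/

open Real Complex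

lemma re_neg_ofReal_mul_exp (a σ : ℝ) (z : ℂ) :
    (-((a : ℂ) * Complex.exp (-(σ : ℂ) * z))).re
      = -(a * (Real.exp (-(σ * z.re)) * Real.cos (σ * z.im))) := by
  have hre : (-(σ : ℂ) * z).re = -(σ * z.re) := by simp
  have him : (-(σ : ℂ) * z).im = -(σ * z.im) := by simp
  rw [neg_re, re_ofReal_mul, Complex.exp_re, hre, him, Real.cos_neg]

lemma norm_le_of_eq_neg_ofReal_mul_exp {a σ : ℝ} (ha : 0 ≤ a) (hσ : 0 ≤ σ) {z : ℂ}
    (hz : z = -((a : ℂ) * Complex.exp (-(σ : ℂ) * z))) (hre : 0 ≤ z.re) : ‖z‖ ≤ a :=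
  calc ‖z‖ = ‖(a : ℂ) * Complex.exp (-(σ : ℂ) * z)‖ := by rw [← norm_neg ((a : ℂ) * _), ← hz]
    _ = a * Real.exp (-(σ * z.re)) := by
        rw [norm_mul, Complex.norm_exp, norm_real, Real.norm_of_nonneg ha]
        simp
    _ ≤ a * 1 := by
        gcongr
        exact Real.exp_le_one_iff.mpr (neg_nonpos.mpr (mul_nonneg hσ hre))
    _ = a := mul_one a

theorem stmt_1 (a σ : ℝ) (ha : 0 < a) (hσ : 0 < σ) (hstab : a * σ < Real.pi / 2)
    (lam : ℂ) (hroot : lam + (a : ℂ) * Complex.exp (-(σ : ℂ) * lam) = 0) :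
    lam.re < 0 := by
  have hlam : lam = -((a : ℂ) * Complex.exp (-(σ : ℂ) * lam)) := eq_neg_of_add_eq_zero_left hroot
  by_contra! hre
  have him : |σ * lam.im| < π / 2 :=
    calc |σ * lam.im| = σ * |lam.im| := by rw [abs_mul, abs_of_pos hσ]
      _ ≤ σ * a := by
        gcongr
        exact (abs_im_le_norm lam).trans
          (norm_le_of_eq_neg_ofReal_mul_exp ha.le hσ.le hlam hre)
      _ < π / 2 := by linarith
  have hcos : 0 < Real.cos (σ * lam.im) := Real.cos_pos_of_mem_Ioo (abs_lt.mp him)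
  have hre_eq := congrArg Complex.re hlam
  rw [re_neg_ofReal_mul_exp] at hre_eq
  have : 0 < a * (Real.exp (-(σ * lam.re)) * Real.cos (σ * lam.im)) := by positivity
  linarith
end

section
/- Let a > 0 and σ > 0 with a·σ > π/2. Then there exists a complex number λ with strictly positive real part satisfying λ + a·exp(−σ·λ) = 0. -/
/-!
With `μ = σλ` and `b = aσ` the equation reads `μ e^μ = -b`. On the curve `μ = -θ cot θ + θi` the
product `μ e^μ` is real, since there `μ = -(θ / sin θ) e^{-θi}`, so `μ e^μ = -(θ / sin θ) e^{-θ cot θ}`.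
For `θ ∈ (π/2, π)` the real part `-θ cot θ` is positive, and the modulus `(θ / sin θ) e^{-θ cot θ}`
is continuous, equals `π/2` at `θ = π/2` and tends to `+∞` as `θ → π`, so it takes the value
`b > π/2`.
-/

open Real Complex

theorem mul_exp_eq_of_mul_sin_eq {x θ : ℝ} (hθ : Real.sin θ ≠ 0)
    (hx : x * Real.sin θ = -(θ * Real.cos θ)) :
    ((x : ℂ) + θ * I) * Complex.exp (x + θ * I) = -((θ / Real.sin θ * Real.exp x : ℝ) : ℂ) := by
  have hμ : (x : ℂ) + θ * I = -((θ / Real.sin θ : ℝ) : ℂ) * Complex.exp (-(θ * I)) := by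
    rw [← neg_mul, ← ofReal_neg θ, Complex.exp_ofReal_mul_I, Real.cos_neg, Real.sin_neg,
      (eq_div_iff_mul_eq hθ).mpr hx]
    have hθ' : Complex.sin θ ≠ 0 := by exact_mod_cast hθ
    push_cast
    field_simp
    ring
  have hinv : Complex.exp (-(θ * I)) * Complex.exp (θ * I) = 1 := by
    rw [← Complex.exp_add, neg_add_cancel, Complex.exp_zero]
  rw [Complex.exp_add, hμ, ofReal_mul, ofReal_exp]
  linear_combination (-((θ / Real.sin θ : ℝ) : ℂ) * Complex.exp x) * hinv

open Set in
theorem exists_mem_Ioo_div_sin_mul_exp_eq {b : ℝ} (hb : π / 2 < b) :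
    ∃ θ ∈ Ioo (π / 2) π,
      θ / Real.sin θ * Real.exp (-(θ * Real.cos θ) / Real.sin θ) = b := by
  set f : ℝ → ℝ := fun θ => θ / Real.sin θ * Real.exp (-(θ * Real.cos θ) / Real.sin θ)
  have hb_pos : 0 < b := by linarith [pi_pos]
  set ε := π / (4 * b)
  have hε : 0 < ε := by positivity
  have hεπ : ε < π / 2 := by
    rw [div_lt_div_iff₀ (by positivity) two_pos]; nlinarith [pi_gt_three]
  have hsin_pos : ∀ θ ∈ Icc (π / 2) (π - ε), 0 < Real.sin θ := fun θ hθ =>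
    Real.sin_pos_of_pos_of_lt_pi (by linarith [hθ.1, pi_pos]) (by linarith [hθ.2])
  have hcont : ContinuousOn f (Icc (π / 2) (π - ε)) := by
    have := fun θ hθ => (hsin_pos θ hθ).ne'
    fun_prop (disch := assumption)
  have hf_left : f (π / 2) = π / 2 := by simp [f]
  have hf_right : b < f (π - ε) := by
    have hs : 0 < Real.sin (π - ε) := hsin_pos _ ⟨by linarith, le_rfl⟩
    have hle : Real.sin (π - ε) ≤ ε := by rw [Real.sin_pi_sub]; exact Real.sin_le hε.le
    have hexp : 1 ≤ Real.exp (-((π - ε) * Real.cos (π - ε)) / Real.sin (π - ε)) := by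
      rw [Real.one_le_exp_iff, Real.cos_pi_sub]
      have := Real.cos_nonneg_of_mem_Icc ⟨by linarith, hεπ.le⟩
      apply div_nonneg _ hs.le
      nlinarith
    have h2b : (π / 2) / ε = 2 * b := by simp only [ε]; field_simp; norm_num
    calc b < (π / 2) / ε := by linarith
      _ ≤ (π - ε) / Real.sin (π - ε) := by gcongr <;> linarith
      _ ≤ f (π - ε) := le_mul_of_one_le_right (div_nonneg (by linarith) hs.le) hexp
  obtain ⟨θ, hθ, hfθ⟩ :=
    intermediate_value_Ioo (by linarith) hcont (by rw [hf_left]; exact ⟨hb, hf_right⟩)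
  exact ⟨θ, ⟨hθ.1, hθ.2.trans (by linarith)⟩, hfθ⟩

theorem exists_re_pos_mul_exp_eq_neg {b : ℝ} (hb : π / 2 < b) :
    ∃ μ : ℂ, 0 < μ.re ∧ μ * Complex.exp μ = -b := by
  obtain ⟨θ, ⟨hθ_gt, hθ_lt⟩, hθ⟩ := exists_mem_Ioo_div_sin_mul_exp_eq hb
  have hsin : 0 < Real.sin θ := Real.sin_pos_of_pos_of_lt_pi (by linarith [pi_pos]) hθ_lt
  have hcos : Real.cos θ < 0 := Real.cos_neg_of_pi_div_two_lt_of_lt hθ_gt (by linarith)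
  set x := -(θ * Real.cos θ) / Real.sin θ
  refine ⟨x + θ * I, by simpa using div_pos (by nlinarith) hsin, ?_⟩
  rw [mul_exp_eq_of_mul_sin_eq hsin.ne' (div_mul_cancel₀ _ hsin.ne'), hθ]

theorem stmt_3_general (a σ : ℝ) (hσ : 0 < σ) (hunst : Real.pi / 2 < a * σ) :
    ∃ lam : ℂ, 0 < lam.re ∧ lam + (a : ℂ) * Complex.exp (-(σ : ℂ) * lam) = 0 := by
  obtain ⟨μ, hμ_re, hμ⟩ := exists_re_pos_mul_exp_eq_neg hunst
  have hσ' : (σ : ℂ) ≠ 0 := ofReal_ne_zero.mpr hσ.ne'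
  refine ⟨μ / σ, by simpa [Complex.div_ofReal_re] using div_pos hμ_re hσ, ?_⟩
  have hinv : Complex.exp (-μ) * Complex.exp μ = 1 := by
    rw [← Complex.exp_add, neg_add_cancel, Complex.exp_zero]
  rw [neg_mul, mul_div_cancel₀ _ hσ']
  field_simp
  push_cast at hμ
  linear_combination Complex.exp (-μ) * hμ - μ * hinv

theorem stmt_3 (a σ : ℝ) (ha : 0 < a) (hσ : 0 < σ) (hunst : Real.pi / 2 < a * σ) :
    ∃ lam : ℂ, 0 < lam.re ∧ lam + (a : ℂ) * Complex.exp (-(σ : ℂ) * lam) = 0 :=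
  stmt_3_general a σ hσ hunst
end

section
/- Let a > 0, let σ_1, …, σ_k > 0, and let w_1, …, w_k ≥ 0 with w_1 + ⋯ + w_k = 1. If λ = x + i·y is a complex root of λ + a·∑_{j=1}^k w_j·exp(−σ_j·λ) = 0 with x ≥ 0, then there exists an index j with w_j > 0 and cos(σ_j·y) ≤ 0, and consequently |y| ≥ π/(2·max_j σ_j). -/
open Real Complex

theorem stmt_13 (a : ℝ) (ha : 0 < a) (k : ℕ) (hk : 0 < k)
    (σ w : Fin k → ℝ) (hσ : ∀ j, 0 < σ j) (hw : ∀ j, 0 ≤ w j)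
    (hwsum : ∑ j, w j = 1) (x y : ℝ) (hx : 0 ≤ x)
    (hroot : ((x : ℂ) + (y : ℂ) * Complex.I) +
      (a : ℂ) * ∑ j, (w j : ℂ) *
        Complex.exp (-(σ j : ℂ) * ((x : ℂ) + (y : ℂ) * Complex.I)) = 0) :
    (∃ j, 0 < w j ∧ Real.cos (σ j * y) ≤ 0) ∧
    Real.pi / (2 * Finset.univ.sup' (Finset.univ_nonempty_iff.mpr
      (Fin.pos_iff_nonempty.mp hk)) σ) ≤ |y| := by
  -- real part of the root equation
  have hre : x + a * ∑ j, w j * (Real.exp (-(σ j) * x) * Real.cos (σ j * y)) = 0 := by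
    have h := congrArg Complex.re hroot
    simp only [Complex.add_re, Complex.mul_re, Complex.ofReal_re, Complex.ofReal_im,
      Complex.I_re, Complex.I_im, Complex.zero_re, Complex.re_sum, Complex.exp_re,
      Complex.neg_re, Complex.neg_im, Complex.mul_im, Complex.add_im] at h
    rw [show ∑ j, w j * (Real.exp (-(σ j) * x) * Real.cos (σ j * y))
        = ∑ j, w j * Real.exp (-(x * σ j)) * Real.cos (-(y * σ j)) from
      Finset.sum_congr rfl fun j _ => by rw [Real.cos_neg]; ring]
    ring_nf at h ⊢
    linarith
  -- first part
  have hmain : ∃ j, 0 < w j ∧ Real.cos (σ j * y) ≤ 0 := by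
    by_contra hcon
    push_neg at hcon
    have hpos : ∀ j, 0 < w j → 0 < Real.cos (σ j * y) := hcon
    obtain ⟨j0, hj0⟩ : ∃ j, 0 < w j := by
      by_contra h
      push_neg at h
      have : ∑ j, w j = 0 := Finset.sum_eq_zero fun j _ => le_antisymm (h j) (hw j)
      simp [this] at hwsum
    have hsum : 0 < ∑ j, w j * (Real.exp (-(σ j) * x) * Real.cos (σ j * y)) := by
      refine Finset.sum_pos' (fun j _ => ?_) ⟨j0, Finset.mem_univ _, ?_⟩
      · rcases lt_or_eq_of_le (hw j) with h | h
        · have hc := hpos j h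
          exact le_of_lt (mul_pos h (mul_pos (Real.exp_pos _) hc))
        · simp [h.symm]
      · have hc := hpos j0 hj0
        exact mul_pos hj0 (mul_pos (Real.exp_pos _) hc)
    nlinarith [mul_pos ha hsum]
  refine ⟨hmain, ?_⟩
  obtain ⟨j, hwj, hcos⟩ := hmain
  have hS : σ j ≤ Finset.univ.sup' (Finset.univ_nonempty_iff.mpr
      (Fin.pos_iff_nonempty.mp hk)) σ := Finset.le_sup' σ (Finset.mem_univ j)
  have hSpos : 0 < Finset.univ.sup' (Finset.univ_nonempty_iff.mpr
      (Fin.pos_iff_nonempty.mp hk)) σ := lt_of_lt_of_le (hσ j) hS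
  have habs : Real.pi / 2 ≤ |σ j * y| := by
    by_contra h
    push_neg at h
    have : σ j * y ∈ Set.Ioo (-(Real.pi/2)) (Real.pi/2) := by
      constructor <;> [linarith [neg_abs_le (σ j * y)]; linarith [le_abs_self (σ j * y)]]
    exact absurd (Real.cos_pos_of_mem_Ioo this) (not_lt.mpr hcos)
  have h1 : Real.pi / 2 ≤ σ j * |y| := by
    rwa [abs_mul, abs_of_pos (hσ j)] at habs
  have h2 : Real.pi / (2 * σ j) ≤ |y| := by
    rw [div_le_iff₀ (by have := hσ j; positivity)]
    nlinarith [hσ j]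
  calc Real.pi / (2 * Finset.univ.sup' (Finset.univ_nonempty_iff.mpr
      (Fin.pos_iff_nonempty.mp hk)) σ) ≤ Real.pi / (2 * σ j) := by
        apply div_le_div_of_nonneg_left Real.pi_pos.le (by have := hσ j; positivity)
        linarith
    _ ≤ |y| := h2
end
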